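/- For every integer k > 0 and every 0 ≤ j ≤ n − 1, the map [(k, x, w)] ↦ [(0, (x_1, …, x_j, x_{j+1} + k, x_{j+2}, …, x_n), (0, …, 0, w_{j+1} − k, w_{j+2}, …, w_n))] (with j zeros at the start of the last tuple, and ∞ − k := ∞) is a well-defined target-preserving bijection from {g ∈ (F_n)_{k,j} : w_{j+1} ≥ k} onto (F_n)_{0,j}. -/

import Mathlib

/-! Common setup for the groupoid `F_n` of the quantum sphere `S_q^{2n+1}`. -/

/-- `x_i + w_i ≥ 0` for all `i` (vacuous at coordinates where `w_i = ∞`). -/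
def okPos {n : ℕ} (x : Fin n → ℤ) (w : Fin n → ℕ∞) : Prop :=
  ∀ i, ∀ m : ℕ, w i = (m : ℕ∞) → 0 ≤ x i + (m : ℤ)

/-- The defining condition of `F̃_n`: whenever `w_i = ∞`,
`x_i = -z - x_1 - ⋯ - x_{i-1}` and `x_j = 0` for `j > i`. -/
def condF {n : ℕ} (z : ℤ) (x : Fin n → ℤ) (w : Fin n → ℕ∞) : Prop :=
  ∀ i, w i = ⊤ → (x i = -z - ∑ j ∈ Finset.Iio i, x j) ∧ (∀ j, i < j → x j = 0)

/-- The set `F̃_n` of admissible triples `(z, x, w)`. -/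
abbrev FTil (n : ℕ) : Type :=
  {p : ℤ × (Fin n → ℤ) × (Fin n → ℕ∞) // okPos p.2.1 p.2.2 ∧ condF p.1 p.2.1 p.2.2}

/-- `ν(w)`: keep coordinates before the first `∞`, replace all later ones by `∞`. -/
def qnu {n : ℕ} (w : Fin n → ℕ∞) : Fin n → ℕ∞ :=
  fun i => if ∃ j, j ≤ i ∧ w j = ⊤ then ⊤ else w i

/-- Addition of an integer to an extended natural number (`a + ∞ = ∞`). -/
def addZN (a : ℤ) (b : ℕ∞) : ℕ∞ :=
  if b = ⊤ then ⊤ else (((a + (b.toNat : ℤ)).toNat : ℕ) : ℕ∞)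

/-- Coordinatewise sum `x + w`. -/
def addxw {n : ℕ} (x : Fin n → ℤ) (w : Fin n → ℕ∞) : Fin n → ℕ∞ :=
  fun i => addZN (x i) (w i)

/-- The relation `(z, x, w) ∼ (z', x', w')` iff `z = z'`, `x = x'`, `ν(w) = ν(w')`. -/
def FRel {n : ℕ} (a b : FTil n) : Prop :=
  a.val.1 = b.val.1 ∧ a.val.2.1 = b.val.2.1 ∧ qnu a.val.2.2 = qnu b.val.2.2

instance FSetoid (n : ℕ) : Setoid (FTil n) where
  r := FRel
  iseqv := ⟨fun _ => ⟨rfl, rfl, rfl⟩, fun h => ⟨h.1.symm, h.2.1.symm, h.2.2.symm⟩,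
    fun h1 h2 => ⟨h1.1.trans h2.1, h1.2.1.trans h2.2.1, h1.2.2.trans h2.2.2⟩⟩

/-- The groupoid `F_n = F̃_n / ∼`. -/
abbrev Fgpd (n : ℕ) : Type := Quotient (FSetoid n)

/-- The `z`-component of a class in `F_n`. -/
def qzp {n : ℕ} (g : Fgpd n) : ℤ :=
  Quotient.lift (fun a : FTil n => a.val.1) (fun a b h => (h : FRel a b).1) g

/-- The `x`-component of a class in `F_n`. -/
def qxp {n : ℕ} (g : Fgpd n) : Fin n → ℤ :=
  Quotient.lift (fun a : FTil n => a.val.2.1) (fun a b h => (h : FRel a b).2.1) g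

/-- The source `ν(w)` of a class in `F_n`. -/
def qsrc {n : ℕ} (g : Fgpd n) : Fin n → ℕ∞ :=
  Quotient.lift (fun a : FTil n => qnu a.val.2.2) (fun a b h => (h : FRel a b).2.2) g

/-- The target `ν(x + w)` of a class in `F_n` (computed on a representative). -/
noncomputable def qtgt {n : ℕ} (g : Fgpd n) : Fin n → ℕ∞ :=
  qnu (addxw g.out.val.2.1 g.out.val.2.2)

/-- `qIsMul g h p` states that the product `g · h` is defined and equals `p`:
the source of `g` equals the target of `h`, and `p = [(z + z', x + x', w')]`
(a class in `F_n` is determined by its `z`-, `x`-components and its source). -/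
def qIsMul {n : ℕ} (g h p : Fgpd n) : Prop :=
  qsrc g = qtgt h ∧ qzp p = qzp g + qzp h ∧
    (∀ i, qxp p i = qxp g i + qxp h i) ∧ qsrc p = qsrc h

/-- The subset `(F_n)_{k,j}` of classes of degree `k` whose source vanishes in the
first `j` coordinates. -/
def Fkj (n : ℕ) (k : ℤ) (j : ℕ) : Set (Fgpd n) :=
  {g : Fgpd n | qzp g = k ∧ ∀ i : Fin n, (i : ℕ) < j → qsrc g i = 0}

/-! Shifting `c` units from `w_{j+1}` to `x_{j+1}` (and from `z` away) leaves `x + w`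
unchanged, hence the target, and it preserves the defining conditions of `F̃_n` as long as
`w_1 = ⋯ = w_j = 0` and `w_{j+1} ≥ c`: an `∞` can then only occur at positions `≥ j + 1`,
where the change of `z` is compensated by that of `x_{j+1}`. Since `ν` commutes with the shift,
the map is well defined on classes, and the shift by `-k` is its inverse. -/

section ShiftMap

variable {n : ℕ}

lemma addZN_top (a : ℤ) : addZN a ⊤ = ⊤ := if_pos rfl

lemma addZN_coe (a : ℤ) (m : ℕ) : addZN a (m : ℕ∞) = ((a + m).toNat : ℕ∞) := by
  simp [addZN]

lemma addZN_eq_top_iff {a : ℤ} {b : ℕ∞} : addZN a b = ⊤ ↔ b = ⊤ := by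
  unfold addZN; split <;> simp_all

lemma addZN_addZN {a c : ℤ} {b : ℕ∞} (h : ∀ m : ℕ, b = m → 0 ≤ c + m) :
    addZN a (addZN c b) = addZN (a + c) b := by
  induction b using ENat.recTopCoe with
  | top => simp only [addZN_top]
  | coe m =>
    have := h m rfl
    rw [addZN_coe, addZN_coe, addZN_coe]
    congr 2
    omega

lemma addZN_zero (b : ℕ∞) : addZN 0 b = b := by
  induction b using ENat.recTopCoe with
  | top => exact addZN_top 0
  | coe m => simp [addZN_coe]

lemma le_of_addZN_eq_coe {a : ℤ} {b : ℕ∞} {m : ℕ} (h : addZN a b = m) : a ≤ m := by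
  induction b using ENat.recTopCoe with
  | top => simp [addZN_top] at h
  | coe m₀ =>
    rw [addZN_coe, ENat.natCast_inj] at h
    omega

lemma natCast_le_addZN (k : ℕ) (b : ℕ∞) : (k : ℕ∞) ≤ addZN k b := by
  induction b using ENat.recTopCoe with
  | top => simp [addZN_top]
  | coe m =>
    rw [addZN_coe, ENat.natCast_le_natCast]
    omega

lemma qnu_eq_self {w : Fin n → ℕ∞} {i : Fin n} (h : ∀ l ≤ i, w l ≠ ⊤) : qnu w i = w i :=
  if_neg fun ⟨l, hl, hw⟩ => h l hl hw

lemma eq_zero_of_qnu_eq_zero {w : Fin n → ℕ∞} {i : Fin n} (h : qnu w i = 0) : w i = 0 := by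
  unfold qnu at h
  split_ifs at h
  · simp at h
  · exact h

lemma qnu_map (f : Fin n → ℕ∞ → ℕ∞) (hf : ∀ i b, f i b = ⊤ ↔ b = ⊤) (w : Fin n → ℕ∞) :
    qnu (fun i => f i (w i)) = fun i => f i (qnu w i) := by
  funext i
  unfold qnu
  simp only [hf]
  split_ifs
  · exact ((hf i ⊤).2 rfl).symm
  · rfl

lemma qnu_addxw (x : Fin n → ℤ) (w : Fin n → ℕ∞) : qnu (addxw x w) = addxw x (qnu w) :=
  qnu_map (fun i => addZN (x i)) (fun _ _ => addZN_eq_top_iff) w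

lemma qsrc_mk (a : FTil n) : qsrc (⟦a⟧ : Fgpd n) = qnu a.val.2.2 := rfl

lemma qtgt_mk (a : FTil n) : qtgt (⟦a⟧ : Fgpd n) = qnu (addxw a.val.2.1 a.val.2.2) := by
  have hrel : FRel (⟦a⟧ : Fgpd n).out a := Quotient.mk_out a
  rw [qtgt, qnu_addxw, qnu_addxw, hrel.2.1, hrel.2.2]

lemma qsrc_eq_qnu_out (g : Fgpd n) : qsrc g = qnu g.out.val.2.2 :=
  (congrArg qsrc g.out_eq).symm

lemma Fgpd_ext {g h : Fgpd n} (hz : qzp g = qzp h) (hx : qxp g = qxp h)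
    (hs : qsrc g = qsrc h) : g = h := by
  induction g using Quotient.ind
  induction h using Quotient.ind
  exact Quotient.sound ⟨hz, hx, hs⟩

def shiftX (c : ℤ) (j : ℕ) (x : Fin n → ℤ) : Fin n → ℤ :=
  fun i => if (i : ℕ) = j then x i + c else x i

def shiftW (c : ℤ) (j : ℕ) (w : Fin n → ℕ∞) : Fin n → ℕ∞ :=
  fun i => if (i : ℕ) = j then addZN c (w i) else w i

lemma shiftW_eq_top_iff {c : ℤ} {j : ℕ} {w : Fin n → ℕ∞} {i : Fin n} :
    shiftW c j w i = ⊤ ↔ w i = ⊤ := by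
  unfold shiftW
  split_ifs
  exacts [addZN_eq_top_iff, Iff.rfl]

lemma qnu_shiftW (c : ℤ) (j : ℕ) (w : Fin n → ℕ∞) : qnu (shiftW c j w) = shiftW c j (qnu w) :=
  qnu_map (fun i b => if (i : ℕ) = j then addZN c b else b)
    (fun _ _ => shiftW_eq_top_iff (w := fun _ => _)) w

lemma shiftX_neg_shiftX (c : ℤ) (j : ℕ) (x : Fin n → ℤ) : shiftX (-c) j (shiftX c j x) = x := by
  funext i
  unfold shiftX
  split_ifs <;> ring

lemma sum_Iio_shiftX (c : ℤ) (j : ℕ) (x : Fin n → ℤ) (i₀ : Fin n) :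
    ∑ i ∈ Finset.Iio i₀, shiftX c j x i = ∑ i ∈ Finset.Iio i₀, x i + if j < i₀ then c else 0 := by
  have hsplit : ∀ i, shiftX c j x i = x i + if (i : ℕ) = j then c else 0 := by
    intro i
    unfold shiftX
    split_ifs <;> simp
  simp only [hsplit, Finset.sum_add_distrib, add_right_inj]
  split_ifs with hj
  · have hjn : j < n := hj.trans i₀.isLt
    have hval : ∀ i : Fin n, ((i : ℕ) = j) = (i = ⟨j, hjn⟩) := fun i => by simp [Fin.ext_iff]
    simp only [hval]
    rw [Finset.sum_ite_eq', if_pos (Finset.mem_Iio.2 (Fin.lt_def.2 hj))]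
  · refine Finset.sum_eq_zero fun i hi => if_neg ?_
    have : (i : ℕ) < i₀ := Fin.lt_def.1 (Finset.mem_Iio.1 hi)
    omega

/-- Condition on a source `w` under which `[(z, x, w)] ↦ [(z - c, x + c e_j, w - c e_j)]` yields
an element of `F_n` (with `∞ - c = ∞`). -/
def ShiftAdmissible (c : ℤ) (j : ℕ) (w : Fin n → ℕ∞) : Prop :=
  (∀ i : Fin n, (i : ℕ) < j → w i = 0) ∧ ∀ i : Fin n, (i : ℕ) = j → ∀ m : ℕ, w i = m → c ≤ m

lemma ShiftAdmissible.of_qnu {c : ℤ} {j : ℕ} {w : Fin n → ℕ∞}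
    (h : ShiftAdmissible c j (qnu w)) : ShiftAdmissible c j w := by
  have hzero : ∀ i : Fin n, (i : ℕ) < j → w i = 0 := fun i hi =>
    eq_zero_of_qnu_eq_zero (h.1 i hi)
  refine ⟨hzero, fun i hij m hm => h.2 i hij m ?_⟩
  rw [qnu_eq_self, hm]
  intro l hl
  rcases hl.lt_or_eq with hlt | rfl
  · simp [hzero l (by omega)]
  · simp [hm]

lemma ShiftAdmissible.neg_shiftW {c : ℤ} {j : ℕ} {w : Fin n → ℕ∞} (h : ShiftAdmissible c j w) :
    ShiftAdmissible (-c) j (shiftW (-c) j w) := by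
  refine ⟨fun i hi => ?_, fun i hij m hm => ?_⟩
  · rw [shiftW, if_neg (by omega)]
    exact h.1 i hi
  · rw [shiftW, if_pos hij] at hm
    exact le_of_addZN_eq_coe hm

lemma shiftW_shiftW_neg {c : ℤ} {j : ℕ} {w : Fin n → ℕ∞} (h : ShiftAdmissible c j w) :
    shiftW c j (shiftW (-c) j w) = w := by
  funext i
  unfold shiftW
  split_ifs with hij
  · rw [addZN_addZN fun m hm => by linarith [h.2 i hij m hm], add_neg_cancel, addZN_zero]
  · rfl

lemma addxw_shift {c : ℤ} {j : ℕ} {x : Fin n → ℤ} {w : Fin n → ℕ∞}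
    (h : ShiftAdmissible c j w) : addxw (shiftX c j x) (shiftW (-c) j w) = addxw x w := by
  funext i
  unfold addxw shiftX shiftW
  split_ifs with hij
  · rw [addZN_addZN fun m hm => by linarith [h.2 i hij m hm], add_neg_cancel_right]
  · rfl

lemma okPos_shift {c : ℤ} {j : ℕ} {x : Fin n → ℤ} {w : Fin n → ℕ∞} (hok : okPos x w)
    (h : ShiftAdmissible c j w) : okPos (shiftX c j x) (shiftW (-c) j w) := by
  intro i m hm
  unfold shiftX
  unfold shiftW at hm
  split_ifs at hm ⊢ with hij
  · obtain ⟨m₀, hm₀⟩ : ∃ m₀ : ℕ, (m₀ : ℕ∞) = w i :=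
      ENat.ne_top_iff_exists.1 fun ht => by simp [ht, addZN_top] at hm
    rw [← hm₀, addZN_coe, ENat.natCast_inj] at hm
    have := h.2 i hij m₀ hm₀.symm
    have := hok i m₀ hm₀.symm
    omega
  · exact hok i m hm

lemma condF_shift {z c : ℤ} {j : ℕ} {x : Fin n → ℤ} {w : Fin n → ℕ∞} (hcf : condF z x w)
    (h : ShiftAdmissible c j w) : condF (z - c) (shiftX c j x) (shiftW (-c) j w) := by
  intro i hi
  have hwi : w i = ⊤ := shiftW_eq_top_iff.1 hi
  obtain ⟨hx, hlater⟩ := hcf i hwi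
  have hji : j ≤ i := by
    by_contra hlt
    simp [h.1 i (by omega)] at hwi
  refine ⟨?_, fun l hl => ?_⟩
  · rw [sum_Iio_shiftX]
    unfold shiftX
    rcases hji.lt_or_eq with hlt | heq
    · rw [if_neg (by omega), if_pos hlt, hx]
      ring
    · rw [if_pos heq.symm, if_neg (by omega), hx]
      ring
  · unfold shiftX
    rw [if_neg (by omega)]
    exact hlater l hl

def FTil.shift (c : ℤ) (j : ℕ) (a : FTil n) (h : ShiftAdmissible c j a.val.2.2) : FTil n :=
  ⟨(a.val.1 - c, shiftX c j a.val.2.1, shiftW (-c) j a.val.2.2),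
    okPos_shift a.prop.1 h, condF_shift a.prop.2 h⟩

open Classical in
/-- Extended by the identity to the classes where the shift is not admissible. -/
noncomputable def shiftF (c : ℤ) (j : ℕ) (g : Fgpd n) : Fgpd n :=
  if h : ShiftAdmissible c j g.out.val.2.2 then ⟦g.out.shift c j h⟧ else g

variable {c : ℤ} {j : ℕ} {g : Fgpd n}

lemma exists_shiftF_eq_mk (h : ShiftAdmissible c j (qsrc g)) :
    ∃ (a : FTil n) (ha : ShiftAdmissible c j a.val.2.2),
      g = ⟦a⟧ ∧ shiftF c j g = ⟦a.shift c j ha⟧ :=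
  have ha := (qsrc_eq_qnu_out g ▸ h).of_qnu
  ⟨g.out, ha, g.out_eq.symm, dif_pos ha⟩

lemma qzp_shiftF (h : ShiftAdmissible c j (qsrc g)) : qzp (shiftF c j g) = qzp g - c := by
  obtain ⟨a, ha, rfl, hφ⟩ := exists_shiftF_eq_mk h
  rw [hφ]
  rfl

lemma qxp_shiftF (h : ShiftAdmissible c j (qsrc g)) :
    qxp (shiftF c j g) = shiftX c j (qxp g) := by
  obtain ⟨a, ha, rfl, hφ⟩ := exists_shiftF_eq_mk h
  rw [hφ]
  rfl

lemma qsrc_shiftF (h : ShiftAdmissible c j (qsrc g)) :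
    qsrc (shiftF c j g) = shiftW (-c) j (qsrc g) := by
  obtain ⟨a, ha, rfl, hφ⟩ := exists_shiftF_eq_mk h
  rw [hφ, qsrc_mk, qsrc_mk, FTil.shift, qnu_shiftW]

lemma qtgt_shiftF (h : ShiftAdmissible c j (qsrc g)) : qtgt (shiftF c j g) = qtgt g := by
  obtain ⟨a, ha, rfl, hφ⟩ := exists_shiftF_eq_mk h
  rw [hφ, qtgt_mk, qtgt_mk, FTil.shift, addxw_shift ha]

lemma shiftF_mem_Fkj (h : ShiftAdmissible c j (qsrc g)) :
    shiftF c j g ∈ Fkj n (qzp g - c) j := by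
  refine ⟨qzp_shiftF h, fun i hi => ?_⟩
  rw [qsrc_shiftF h, shiftW, if_neg (by omega)]
  exact h.1 i hi

lemma shiftF_neg_shiftF (h : ShiftAdmissible c j (qsrc g)) :
    shiftF (-c) j (shiftF c j g) = g := by
  have h' : ShiftAdmissible (-c) j (qsrc (shiftF c j g)) := qsrc_shiftF h ▸ h.neg_shiftW
  refine Fgpd_ext ?_ ?_ ?_
  · rw [qzp_shiftF h', qzp_shiftF h]
    ring
  · rw [qxp_shiftF h', qxp_shiftF h, shiftX_neg_shiftX]
  · rw [qsrc_shiftF h', qsrc_shiftF h, neg_neg, shiftW_shiftW_neg h]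

end ShiftMap

/-- For `k > 0` and `0 ≤ j ≤ n - 1`, the map
`[(k, x, w)] ↦ [(0, (x₁, …, x_j, x_{j+1} + k, x_{j+2}, …), (0, …, 0, w_{j+1} - k, w_{j+2}, …))]`
(with `∞ - k = ∞`) is a well-defined target-preserving bijection from
`{g ∈ (F_n)_{k,j} : w_{j+1} ≥ k}` onto `(F_n)_{0,j}`. -/
theorem stmt14 (n : ℕ) (hn : 1 ≤ n) (k : ℕ) (j : ℕ) (hj : j ≤ n - 1) :
    ∃ φ : Fgpd n → Fgpd n,
      (∀ g : Fgpd n, g ∈ Fkj n k j → (k : ℕ∞) ≤ qsrc g ⟨j, by omega⟩ →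
        qzp (φ g) = 0 ∧
        (∀ i : Fin n, qxp (φ g) i = if (i : ℕ) = j then qxp g i + k else qxp g i) ∧
        (∀ i : Fin n, qsrc (φ g) i =
          if (i : ℕ) = j then addZN (-(k : ℤ)) (qsrc g i) else qsrc g i) ∧
        qtgt (φ g) = qtgt g) ∧
      Set.BijOn φ {g : Fgpd n | g ∈ Fkj n k j ∧ (k : ℕ∞) ≤ qsrc g ⟨j, by omega⟩}
        (Fkj n 0 j) := by
  have hjn : j < n := by omega
  have admissible_k : ∀ g ∈ {g : Fgpd n | g ∈ Fkj n k j ∧ (k : ℕ∞) ≤ qsrc g ⟨j, hjn⟩},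
      ShiftAdmissible (k : ℤ) j (qsrc g) := by
    rintro g ⟨⟨-, hzero⟩, hk⟩
    refine ⟨hzero, fun i hij m hm => ?_⟩
    obtain rfl : i = ⟨j, hjn⟩ := Fin.ext hij
    exact_mod_cast hm ▸ hk
  have admissible_neg_k : ∀ g ∈ Fkj n 0 j, ShiftAdmissible (-(k : ℤ)) j (qsrc g) :=
    fun g hg => ⟨hg.2, fun _ _ m _ => by omega⟩
  refine ⟨shiftF k j, fun g hg hk => ?_, ?_⟩
  · have h := admissible_k g ⟨hg, hk⟩
    exact ⟨by rw [qzp_shiftF h, hg.1, sub_self], fun i => by rw [qxp_shiftF h]; rfl,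
      fun i => by rw [qsrc_shiftF h]; rfl, qtgt_shiftF h⟩
  refine Set.InvOn.bijOn (f' := shiftF (-k) j)
    ⟨fun g hg => shiftF_neg_shiftF (admissible_k g hg), fun g hg => ?_⟩
    (fun g hg => ?_) (fun g hg => ?_)
  · simpa only [neg_neg] using shiftF_neg_shiftF (admissible_neg_k g hg)
  · simpa only [hg.1.1, sub_self] using shiftF_mem_Fkj (admissible_k g hg)
  · have h := admissible_neg_k g hg
    refine ⟨by simpa only [hg.1, zero_sub, neg_neg] using shiftF_mem_Fkj h, ?_⟩
    rw [qsrc_shiftF h, neg_neg, shiftW, if_pos rfl]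
    exact natCast_le_addZN k _
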